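/- The nonabelian exterior square of the Heisenberg Lie algebra satisfies H(1) ∧ H(1) ≅ A(3), the 3-dimensional abelian Lie algebra, and H(m) ∧ H(m) ≅ A(2m² − m) for all m ≥ 2. -/

import Mathlib

open Module Function

universe u v

/-! ### Product of Lie algebras -/

section ProdLie

variable (k : Type) [Field k]
variable (L₁ : Type*) (L₂ : Type*) [LieRing L₁] [LieRing L₂]

instance Prod.instLieRing : LieRing (L₁ × L₂) where
  bracket x y := (⁅x.1, y.1⁆, ⁅x.2, y.2⁆)
  add_lie x y z := by ext <;> exact add_lie _ _ _
  lie_add x y z := by ext <;> exact lie_add _ _ _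
  lie_self x := by ext <;> exact lie_self _
  leibniz_lie x y z := by ext <;> exact leibniz_lie _ _ _

instance Prod.instLieAlgebra [LieAlgebra k L₁] [LieAlgebra k L₂] :
    LieAlgebra k (L₁ × L₂) where
  lie_smul c x y := by ext <;> exact lie_smul _ _ _

end ProdLie

section Defs

variable (k : Type) [Field k]
variable (L : Type u) [LieRing L] [LieAlgebra k L]

/-- The derived subalgebra `L² = ⁅L, L⁆` as a Lie ideal. -/
def derived : LieIdeal k L := ⁅(⊤ : LieIdeal k L), (⊤ : LieIdeal k L)⁆

/-- A Lie algebra is capable if it is isomorphic to `H / Z(H)` for some Lie algebra `H`. -/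
def IsCapable : Prop :=
  ∃ (H : Type u) (_ : LieRing H) (_ : LieAlgebra k H),
    Nonempty (L ≃ₗ⁅k⁆ H ⧸ LieAlgebra.center k H)

/-- A surjective Lie algebra morphism with central kernel. -/
def IsCentralExtension {E : Type u} [LieRing E] [LieAlgebra k E] (φ : E →ₗ⁅k⁆ L) : Prop :=
  Function.Surjective φ ∧ φ.ker ≤ LieAlgebra.center k E

/-- The epicenter `Z^*(L)`: the intersection of the images `φ(Z(E))` over all central
extensions `φ : E → L`. -/
def epicenter : LieIdeal k L :=
  sInf {I : LieIdeal k L |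
    ∃ (E : Type u) (_ : LieRing E) (_ : LieAlgebra k E) (φ : E →ₗ⁅k⁆ L),
      IsCentralExtension k L φ ∧ (I : Set L) = φ '' (LieAlgebra.center k E)}

/-! ### The nonabelian exterior square -/

/-- The defining relations of the nonabelian exterior square of a Lie algebra. -/
def exteriorRels : Set (FreeLieAlgebra k (L × L)) :=
  {a | (∃ (x x' y : L), a = FreeLieAlgebra.of k (x + x', y) - FreeLieAlgebra.of k (x, y)
          - FreeLieAlgebra.of k (x', y)) ∨
       (∃ (x y y' : L), a = FreeLieAlgebra.of k (x, y + y') - FreeLieAlgebra.of k (x, y)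
          - FreeLieAlgebra.of k (x, y')) ∨
       (∃ (c : k) (x y : L), a = FreeLieAlgebra.of k (c • x, y) - c • FreeLieAlgebra.of k (x, y)) ∨
       (∃ (c : k) (x y : L), a = FreeLieAlgebra.of k (x, c • y) - c • FreeLieAlgebra.of k (x, y)) ∨
       (∃ (x x' y : L), a = FreeLieAlgebra.of k (⁅x, x'⁆, y) - FreeLieAlgebra.of k (x, ⁅x', y⁆)
          + FreeLieAlgebra.of k (x', ⁅x, y⁆)) ∨
       (∃ (x y y' : L), a = FreeLieAlgebra.of k (x, ⁅y, y'⁆) - FreeLieAlgebra.of k (⁅y', x⁆, y)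
          + FreeLieAlgebra.of k (⁅y, x⁆, y')) ∨
       (∃ (x y x' y' : L), a = ⁅FreeLieAlgebra.of k (x, y), FreeLieAlgebra.of k (x', y')⁆
          + FreeLieAlgebra.of k (⁅y, x⁆, ⁅x', y'⁆)) ∨
       (∃ (x : L), a = FreeLieAlgebra.of k (x, x))}

/-- The ideal of relations of the nonabelian exterior square. -/
noncomputable def exteriorIdeal : LieIdeal k (FreeLieAlgebra k (L × L)) :=
  LieSubmodule.lieSpan k _ (exteriorRels k L)

/-- The nonabelian exterior square `L ∧ L`. -/
abbrev ExteriorSquare := FreeLieAlgebra k (L × L) ⧸ exteriorIdeal k L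

variable {L} in
/-- The element `x ∧ y` of the nonabelian exterior square. -/
noncomputable def wedge (x y : L) : ExteriorSquare k L :=
  LieSubmodule.Quotient.mk' (exteriorIdeal k L) (FreeLieAlgebra.of k (x, y))

/-- The exterior center `Z^∧(L) = {x | x ∧ y = 0 for all y}`. -/
def exteriorCenter : Set L := {x | ∀ y : L, wedge k x y = 0}

end Defs

section Defs2

variable (k : Type) [Field k]
variable (L : Type u) [LieRing L] [LieAlgebra k L]

/-- The canonical free presentation `F(L) → L`. -/
noncomputable def pres : FreeLieAlgebra k L →ₗ⁅k⁆ L := FreeLieAlgebra.lift k id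

/-- The Schur multiplier computed from a presentation `ρ : F(L) → L'`,
namely `(ker ρ ∩ F²) / ⁅ker ρ, F⁆`. -/
abbrev multOf {L' : Type v} [LieRing L'] [LieAlgebra k L']
    (ρ : FreeLieAlgebra k L →ₗ⁅k⁆ L') : Type _ :=
  (ρ.ker ⊓ derived k (FreeLieAlgebra k L)).toSubmodule ⧸
    ((⁅ρ.ker, (⊤ : LieIdeal k (FreeLieAlgebra k L))⁆ :
        LieIdeal k (FreeLieAlgebra k L)).toSubmodule.comap
      (ρ.ker ⊓ derived k (FreeLieAlgebra k L)).toSubmodule.subtype)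

/-- The Schur multiplier `M(L) = (R ∩ F²)/⁅R, F⁆` for the canonical free
presentation `0 → R → F(L) → L → 0`. -/
noncomputable abbrev SchurMultiplier : Type _ := multOf k L (pres k L)

/-- The quotient map `L → L ⧸ N` as a morphism of Lie algebras. -/
def lieQuotMk (N : LieIdeal k L) : L →ₗ⁅k⁆ L ⧸ N :=
  { toLinearMap := (N : Submodule k L).mkQ
    map_lie' := rfl }

/-- The canonical presentation `F(L) → L ⧸ N` of a quotient of `L`. -/
noncomputable def presQ (N : LieIdeal k L) : FreeLieAlgebra k L →ₗ⁅k⁆ L ⧸ N :=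
  (lieQuotMk k L N).comp (pres k L)

end Defs2

section maps

variable (k : Type) [Field k]
variable (L : Type u) [LieRing L] [LieAlgebra k L]

lemma ker_le_kerQ (N : LieIdeal k L) : (pres k L).ker ≤ (presQ k L N).ker := by
  intro x hx
  rw [LieHom.mem_ker] at hx ⊢
  simp [presQ, LieHom.comp_apply, hx, lieQuotMk]

/-- The natural map `M(L) → M(L/N)` on Schur multipliers induced by a
(central) ideal `N` of `L`. -/
noncomputable def multMap (N : LieIdeal k L) :
    SchurMultiplier k L →ₗ[k] multOf k L (presQ k L N) :=
  Submodule.mapQ _ _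
    (Submodule.inclusion (by
      exact_mod_cast inf_le_inf_right (derived k (FreeLieAlgebra k L)) (ker_le_kerQ k L N)))
    (by
      intro x hx
      simp only [Submodule.mem_comap] at hx ⊢
      have hmono : (⁅(pres k L).ker, (⊤ : LieIdeal k (FreeLieAlgebra k L))⁆ :
          LieIdeal k (FreeLieAlgebra k L)) ≤
          ⁅(presQ k L N).ker, (⊤ : LieIdeal k (FreeLieAlgebra k L))⁆ :=
        LieSubmodule.mono_lie_left _ (ker_le_kerQ k L N)
      exact hmono hx)

end maps

section lift

variable {k : Type} [Field k]
variable {L : Type u} [LieRing L] [LieAlgebra k L]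
variable {L' : Type v} [LieRing L'] [LieAlgebra k L']

/-- Universal property of quotients of Lie algebras. -/
def lieQuotLift (I : LieIdeal k L) (f : L →ₗ⁅k⁆ L') (h : I ≤ f.ker) : (L ⧸ I) →ₗ⁅k⁆ L' :=
  { toLinearMap := (I : Submodule k L).liftQ f.toLinearMap (fun x hx => by
      have := h hx; rwa [LieHom.mem_ker] at this)
    map_lie' := by
      rintro ⟨x⟩ ⟨y⟩
      exact f.map_lie x y }

@[simp] lemma lieQuotLift_mk (I : LieIdeal k L) (f : L →ₗ⁅k⁆ L') (h : I ≤ f.ker) (x : L) :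
    lieQuotLift I f h (lieQuotMk k L I x) = f x := rfl

end lift

section extmaps

variable (k : Type) [Field k]
variable (L : Type u) [LieRing L] [LieAlgebra k L]

/-- `x ∧ y` rewritten via the quotient morphism. -/
lemma wedge_def (x y : L) :
    wedge k x y = lieQuotMk k _ (exteriorIdeal k L) (FreeLieAlgebra.of k (x, y)) := rfl

/-- The lift to the free Lie algebra of the map `(x, y) ↦ x ∧ y` valued in the
exterior square of a quotient of `L`. -/
noncomputable def extAux (N : LieIdeal k L) :
    FreeLieAlgebra k (L × L) →ₗ⁅k⁆ ExteriorSquare k (L ⧸ N) :=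
  FreeLieAlgebra.lift k fun p => wedge k (lieQuotMk k L N p.1) (lieQuotMk k L N p.2)

lemma wedge_mem_rel_zero {M : Type v} [LieRing M] [LieAlgebra k M]
    {a : FreeLieAlgebra k (M × M)} (ha : a ∈ exteriorRels k M) :
    lieQuotMk k _ (exteriorIdeal k M) a = 0 := by
  have h : a ∈ exteriorIdeal k M := LieSubmodule.subset_lieSpan ha
  show (exteriorIdeal k M : Submodule k (FreeLieAlgebra k (M × M))).mkQ a = 0
  rw [Submodule.mkQ_apply, Submodule.Quotient.mk_eq_zero]
  exact h

lemma extAux_rels (N : LieIdeal k L) : exteriorIdeal k L ≤ (extAux k L N).ker := by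
  rw [exteriorIdeal, LieSubmodule.lieSpan_le]
  intro a ha
  rw [SetLike.mem_coe, LieHom.mem_ker]
  set q := lieQuotMk k L N with hq
  have key : ∀ x y : L, extAux k L N (FreeLieAlgebra.of k (x, y)) =
      lieQuotMk k _ (exteriorIdeal k (L ⧸ N)) (FreeLieAlgebra.of k (q x, q y)) := by
    intro x y; rw [extAux, FreeLieAlgebra.lift_of_apply]; rfl
  obtain h|h|h|h|h|h|h|h := ha
  · obtain ⟨x, x', y, rfl⟩ := h
    simp only [map_sub, key]
    rw [← map_sub, ← map_sub]
    apply wedge_mem_rel_zero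
    exact Or.inl ⟨q x, q x', q y, by rw [map_add]⟩
  · obtain ⟨x, y, y', rfl⟩ := h
    simp only [map_sub, key]
    rw [← map_sub, ← map_sub]
    apply wedge_mem_rel_zero
    exact Or.inr (Or.inl ⟨q x, q y, q y', by rw [map_add]⟩)
  · obtain ⟨c, x, y, rfl⟩ := h
    simp only [map_sub, map_smul, key]
    rw [← map_smul (lieQuotMk k _ (exteriorIdeal k (L ⧸ N))) c
      (FreeLieAlgebra.of k (q x, q y)), ← map_sub]
    apply wedge_mem_rel_zero
    exact Or.inr (Or.inr (Or.inl ⟨c, q x, q y, rfl⟩))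
  · obtain ⟨c, x, y, rfl⟩ := h
    simp only [map_sub, map_smul, key]
    rw [← map_smul (lieQuotMk k _ (exteriorIdeal k (L ⧸ N))) c
      (FreeLieAlgebra.of k (q x, q y)), ← map_sub]
    apply wedge_mem_rel_zero
    exact Or.inr (Or.inr (Or.inr (Or.inl ⟨c, q x, q y, rfl⟩)))
  · obtain ⟨x, x', y, rfl⟩ := h
    simp only [map_sub, map_add, key]
    rw [← map_sub, ← map_add]
    apply wedge_mem_rel_zero
    refine Or.inr (Or.inr (Or.inr (Or.inr (Or.inl ⟨q x, q x', q y, ?_⟩))))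
    simp [LieHom.map_lie]
  · obtain ⟨x, y, y', rfl⟩ := h
    simp only [map_sub, map_add, key]
    rw [← map_sub, ← map_add]
    apply wedge_mem_rel_zero
    refine Or.inr (Or.inr (Or.inr (Or.inr (Or.inr (Or.inl ⟨q x, q y, q y', ?_⟩)))))
    simp [LieHom.map_lie]
  · obtain ⟨x, y, x', y', rfl⟩ := h
    simp only [map_add, LieHom.map_lie, key]
    rw [← LieHom.map_lie, ← map_add]
    apply wedge_mem_rel_zero
    refine Or.inr (Or.inr (Or.inr (Or.inr (Or.inr (Or.inr (Or.inl
      ⟨q x, q y, q x', q y', ?_⟩))))))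
    simp [LieHom.map_lie]
  · obtain ⟨x, rfl⟩ := h
    rw [key]
    apply wedge_mem_rel_zero
    exact Or.inr (Or.inr (Or.inr (Or.inr (Or.inr (Or.inr (Or.inr ⟨q x, rfl⟩))))))

/-- The natural morphism `L ∧ L → (L/N) ∧ (L/N)` of exterior squares. -/
noncomputable def extSqMap (N : LieIdeal k L) :
    ExteriorSquare k L →ₗ⁅k⁆ ExteriorSquare k (L ⧸ N) :=
  lieQuotLift (exteriorIdeal k L) (extAux k L N) (extAux_rels k L N)

/-- The commutator morphism `L ∧ L → L`, `x ∧ y ↦ ⁅x, y⁆`. -/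
noncomputable def commutatorMap : ExteriorSquare k L →ₗ⁅k⁆ L :=
  lieQuotLift (exteriorIdeal k L) (FreeLieAlgebra.lift k fun p : L × L => ⁅p.1, p.2⁆)
    (by
      rw [exteriorIdeal, LieSubmodule.lieSpan_le]
      intro a ha
      rw [SetLike.mem_coe, LieHom.mem_ker]
      obtain h|h|h|h|h|h|h|h := ha
      · obtain ⟨x, x', y, rfl⟩ := h
        simp [FreeLieAlgebra.lift_of_apply, add_lie]
      · obtain ⟨x, y, y', rfl⟩ := h
        simp [FreeLieAlgebra.lift_of_apply, lie_add]
      · obtain ⟨c, x, y, rfl⟩ := h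
        simp [FreeLieAlgebra.lift_of_apply, smul_lie]
      · obtain ⟨c, x, y, rfl⟩ := h
        simp [FreeLieAlgebra.lift_of_apply, lie_smul]
      · obtain ⟨x, x', y, rfl⟩ := h
        simp only [map_sub, map_add, FreeLieAlgebra.lift_of_apply, lie_lie]
        abel
      · obtain ⟨x, y, y', rfl⟩ := h
        simp only [map_sub, map_add, FreeLieAlgebra.lift_of_apply, lie_lie]
        rw [leibniz_lie x y' y, ← lie_skew y ⁅x, y'⁆]
        abel
      · obtain ⟨x, y, x', y', rfl⟩ := h
        simp only [map_add, LieHom.map_lie, FreeLieAlgebra.lift_of_apply]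
        rw [← lie_skew y x]
        simp
      · obtain ⟨x, rfl⟩ := h
        simp [FreeLieAlgebra.lift_of_apply])

end extmaps

section more

variable (k : Type) [Field k]
variable (L : Type u) [LieRing L] [LieAlgebra k L]

/-- A Lie algebra is a Heisenberg algebra `H(m)` (of dimension `2m + 1`) iff its derived
subalgebra coincides with its centre and is one-dimensional, and it has dimension `2m + 1`. -/
def IsHeisenberg (m : ℕ) : Prop :=
  derived k L = LieAlgebra.center k L ∧ Module.finrank k L = 2 * m + 1 ∧
    Module.finrank k (derived k L) = 1

/-- A vector space regarded as an abelian Lie algebra. -/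
def AbelianLieOf (V : Type v) : Type v := V

instance (V : Type v) [AddCommGroup V] : AddCommGroup (AbelianLieOf V) :=
  inferInstanceAs (AddCommGroup V)

instance (V : Type v) [AddCommGroup V] [Module k V] : Module k (AbelianLieOf V) :=
  inferInstanceAs (Module k V)

instance (V : Type v) [AddCommGroup V] : LieRing (AbelianLieOf V) where
  bracket _ _ := 0
  add_lie _ _ _ := by simp
  lie_add _ _ _ := by simp
  lie_self _ := rfl
  leibniz_lie _ _ _ := by simp

instance (V : Type v) [AddCommGroup V] [Module k V] : LieAlgebra k (AbelianLieOf V) where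
  lie_smul _ _ _ := by
    show (0 : AbelianLieOf V) = _ • (0 : AbelianLieOf V)
    simp

/-- A decomposition of `L` as the direct sum of a Heisenberg algebra `H(m)` and an
abelian Lie algebra of dimension `j`. -/
structure HeisenbergAbelianDecomp (m j : ℕ) where
  H : Type u
  A : Type u
  [instHL : LieRing H]
  [instHA : LieAlgebra k H]
  [instAL : LieRing A]
  [instAA : LieAlgebra k A]
  heis : IsHeisenberg k H m
  abel : IsLieAbelian A
  dimA : Module.finrank k A = j
  equiv : Nonempty (L ≃ₗ⁅k⁆ H × A)

/-- The projection `H × A → H` as a Lie algebra morphism. -/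
def lieFst (H A : Type u) [LieRing H] [LieAlgebra k H] [LieRing A] [LieAlgebra k A] :
    H × A →ₗ⁅k⁆ H :=
  { toLinearMap := LinearMap.fst k H A
    map_lie' := rfl }

end more

/-!
When `⁅⁅L, L⁆, L⁆ = 0`, the defining relations of `L ∧ L` give
`⁅x ∧ y, x' ∧ y'⁆ = ⁅x, y⁆ ∧ ⁅x', y'⁆ = 0` (a central element wedged with a commutator vanishes),
so `L ∧ L` is abelian and, as a vector space, it is `⋀² L` modulo the span `R` of the elements
`⁅x, y⁆ ∧ w + ⁅y, w⁆ ∧ x + ⁅w, x⁆ ∧ y`.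

For `H(m)` with centre `k z`, each of these lies in `z ∧ L`. For `m = 1` they all vanish: the
expression is alternating in `(x, y, w)` and vanishes once an argument is `z`, and an alternating
map on the three-dimensional `H(1)` is determined by its value on a basis containing `z`; hence
`dim = C(3, 2) = 3`. For `m ≥ 2`, the centralizer of any `w` has codimension at most one, so it
is too large to be abelian and contains `u, v` with `⁅u, v⁆ ≠ 0`; the element for `(u, v, w)` is
then a nonzero multiple of `z ∧ w`. So `R = z ∧ L` has dimension `2m`, and
`dim = C(2m + 1, 2) - 2m = 2m² - m`.
-/

namespace exteriorPower

section CommRing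

variable (R M : Type*) [CommRing R] [AddCommGroup M] [Module R M]

noncomputable def ιPair : M →ₗ[R] M →ₗ[R] ⋀[R]^2 M :=
  LinearMap.mk₂ R (fun x y => ιMulti R 2 ![x, y])
    (fun x x' y => by simpa using (ιMulti R 2).toMultilinearMap.cons_add ![y] x x')
    (fun c x y => by simpa using (ιMulti R 2).toMultilinearMap.cons_smul ![y] c x)
    (fun x y y' => by simpa using (ιMulti R 2).toMultilinearMap.snoc_add ![x] y y')
    (fun c x y => by simpa using (ιMulti R 2).toMultilinearMap.snoc_smul ![x] c y)

variable {R M}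

lemma ιPair_apply (x y : M) : ιPair R M x y = ιMulti R 2 ![x, y] := rfl

lemma ιMulti_eq_ιPair (v : Fin 2 → M) : ιMulti R 2 v = ιPair R M (v 0) (v 1) := by
  rw [ιPair_apply]
  congr 1
  ext i
  fin_cases i <;> rfl

@[simp] lemma ιPair_self (x : M) : ιPair R M x x = 0 :=
  (ιMulti R 2).map_eq_zero_of_eq ![x, x] (i := 0) (j := 1) rfl (by decide)

lemma ιPair_swap (x y : M) : ιPair R M y x = -ιPair R M x y := by
  simpa [ιPair_apply] using (ιMulti R 2).map_swap ![x, y] (i := 0) (j := 1) (by decide)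

end CommRing

section Field

variable {K V : Type*} [Field K] [AddCommGroup V] [Module K V]

lemma ιPair_ne_zero {x y : V} (h : LinearIndependent K ![x, y]) : ιPair K V x y ≠ 0 := by
  let s : Set.powersetCard (Fin 2) 2 := ⟨Finset.univ, by simp⟩
  obtain ⟨h0, h1⟩ : Set.powersetCard.ofFinEmbEquiv.symm s 0 = 0 ∧
      Set.powersetCard.ofFinEmbEquiv.symm s 1 = 1 := by
    have := (Set.powersetCard.ofFinEmbEquiv.symm s).strictMono Fin.zero_lt_one
    omega
  have := (ιMulti_family_linearIndependent_field (n := 2) h).ne_zero s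
  rwa [ιMulti_family, ιMulti_eq_ιPair, comp_apply, comp_apply, h0, h1] at this

lemma ker_ιPair {z : V} (hz : z ≠ 0) : LinearMap.ker (ιPair K V z) = K ∙ z := by
  ext w
  rw [LinearMap.mem_ker, Submodule.mem_span_singleton]
  constructor
  · intro h
    by_contra! hw
    refine ιPair_ne_zero (linearIndependent_fin2.2 ⟨?_, ?_⟩)
      ((ιPair_swap z w).trans (by rw [h, neg_zero]))
    · simpa using hz
    · simpa using hw
  · rintro ⟨c, rfl⟩
    simp

lemma finrank_range_ιPair [FiniteDimensional K V] {z : V} (hz : z ≠ 0) :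
    finrank K (LinearMap.range (ιPair K V z)) + 1 = finrank K V := by
  rw [← LinearMap.finrank_range_add_finrank_ker (ιPair K V z), ker_ιPair hz,
    finrank_span_singleton hz]

end Field

end exteriorPower

lemma Submodule.exists_eq_span_singleton_of_finrank_eq_one {K V : Type*} [Field K]
    [AddCommGroup V] [Module K V] {S : Submodule K V} (h : finrank K S = 1) :
    ∃ z ≠ 0, S = K ∙ z := by
  obtain ⟨v, hv0, hv⟩ := finrank_eq_one_iff'.1 h
  refine ⟨v, fun h0 => hv0 (Subtype.ext h0), le_antisymm (fun x hx => ?_) ?_⟩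
  · obtain ⟨c, hc⟩ := hv ⟨x, hx⟩
    exact Submodule.mem_span_singleton.2 ⟨c, congrArg Subtype.val hc⟩
  · exact Submodule.span_le.2 (Set.singleton_subset_iff.2 v.2)

section Wedge

variable {k : Type} [Field k] {L : Type u} [LieRing L] [LieAlgebra k L]

lemma wedge_add_left (x x' y : L) : wedge k (x + x') y = wedge k x y + wedge k x' y := by
  have h := wedge_mem_rel_zero k (M := L) (Or.inl ⟨x, x', y, rfl⟩)
  rwa [map_sub, map_sub, sub_sub, sub_eq_zero] at h

lemma wedge_add_right (x y y' : L) : wedge k x (y + y') = wedge k x y + wedge k x y' := by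
  have h := wedge_mem_rel_zero k (M := L) (Or.inr (Or.inl ⟨x, y, y', rfl⟩))
  rwa [map_sub, map_sub, sub_sub, sub_eq_zero] at h

lemma wedge_smul_left (c : k) (x y : L) : wedge k (c • x) y = c • wedge k x y := by
  have h := wedge_mem_rel_zero k (M := L) (Or.inr (Or.inr (Or.inl ⟨c, x, y, rfl⟩)))
  rwa [map_sub, map_smul, sub_eq_zero] at h

lemma wedge_smul_right (c : k) (x y : L) : wedge k x (c • y) = c • wedge k x y := by
  have h := wedge_mem_rel_zero k (M := L) (Or.inr (Or.inr (Or.inr (Or.inl ⟨c, x, y, rfl⟩))))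
  rwa [map_sub, map_smul, sub_eq_zero] at h

lemma wedge_self (x : L) : wedge k x x = 0 :=
  wedge_mem_rel_zero k (M := L)
    (Or.inr (Or.inr (Or.inr (Or.inr (Or.inr (Or.inr (Or.inr ⟨x, rfl⟩)))))))

lemma wedge_zero_left (y : L) : wedge k 0 y = 0 := by
  simpa using wedge_smul_left (0 : k) 0 y

lemma wedge_neg_left (x y : L) : wedge k (-x) y = -wedge k x y := by
  simpa using wedge_smul_left (-1 : k) x y

lemma wedge_swap (x y : L) : wedge k y x = -wedge k x y := by
  have h := wedge_self (k := k) (x + y)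
  rw [wedge_add_left, wedge_add_right, wedge_add_right, wedge_self, wedge_self] at h
  rw [eq_neg_iff_add_eq_zero, add_comm]
  simpa using h

lemma wedge_lie_add_wedge_lie_add_wedge_lie (x y w : L) :
    wedge k ⁅x, y⁆ w + wedge k ⁅y, w⁆ x + wedge k ⁅w, x⁆ y = 0 := by
  have h := wedge_mem_rel_zero k (M := L)
    (Or.inr (Or.inr (Or.inr (Or.inr (Or.inl ⟨x, y, w, rfl⟩)))))
  simp only [map_add, map_sub, ← wedge_def] at h
  rw [wedge_swap ⁅y, w⁆ x, wedge_swap ⁅x, w⁆ y, sub_neg_eq_add] at h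
  rwa [← lie_skew w x, wedge_neg_left]

lemma lie_wedge_wedge (x y x' y' : L) :
    ⁅wedge k x y, wedge k x' y'⁆ = wedge k ⁅x, y⁆ ⁅x', y'⁆ := by
  have h := wedge_mem_rel_zero k (M := L)
    (Or.inr (Or.inr (Or.inr (Or.inr (Or.inr (Or.inr (Or.inl ⟨x, y, x', y', rfl⟩)))))))
  simp only [map_add, LieHom.map_lie, ← wedge_def] at h
  rwa [← lie_skew y x, wedge_neg_left, add_neg_eq_zero] at h

variable (k L) in
noncomputable def wedgeAlternatingMap : L [⋀^Fin 2]→ₗ[k] ExteriorSquare k L where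
  toFun v := wedge k (v 0) (v 1)
  map_update_add' := by
    intro _ v i x y
    obtain rfl := Subsingleton.elim ‹DecidableEq (Fin 2)› (instDecidableEqFin 2)
    fin_cases i <;> simp [wedge_add_left, wedge_add_right]
  map_update_smul' := by
    intro _ v i c x
    obtain rfl := Subsingleton.elim ‹DecidableEq (Fin 2)› (instDecidableEqFin 2)
    fin_cases i <;> simp [wedge_smul_left, wedge_smul_right]
  map_eq_zero_of_eq' v i j hv hij := by
    fin_cases i <;> fin_cases j <;> simp_all [wedge_self]

end Wedge

namespace ExteriorSquare

variable {k : Type} [Field k] {L : Type u} [LieRing L] [LieAlgebra k L]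

lemma lieSubalgebra_eq_top {K : LieSubalgebra k (ExteriorSquare k L)}
    (hK : ∀ x y : L, wedge k x y ∈ K) : K = ⊤ := by
  let g : FreeLieAlgebra k (L × L) →ₗ⁅k⁆ K :=
    FreeLieAlgebra.lift k fun p => ⟨wedge k p.1 p.2, hK p.1 p.2⟩
  have hg : K.incl.comp g = lieQuotMk k _ (exteriorIdeal k L) :=
    FreeLieAlgebra.hom_ext fun p => by simp [g, wedge_def]
  rw [eq_top_iff]
  rintro e -
  obtain ⟨a, rfl⟩ : ∃ a, lieQuotMk k _ (exteriorIdeal k L) a = e :=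
    Submodule.Quotient.mk_surjective _ e
  rw [← hg]
  exact (g a).2

variable (k L) in
lemma span_wedge_eq_top :
    Submodule.span k (Set.range fun p : L × L => wedge k p.1 p.2) = ⊤ := by
  set W := Submodule.span k (Set.range fun p : L × L => wedge k p.1 p.2)
  have hW : ∀ a ∈ W, ∀ b ∈ W, ⁅a, b⁆ ∈ W := by
    intro a ha b hb
    have h := Submodule.apply_mem_map₂
      (LieAlgebra.ad k (ExteriorSquare k L) :
        ExteriorSquare k L →ₗ[k] Module.End k (ExteriorSquare k L)) ha hb
    rw [Submodule.map₂_span_span] at h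
    refine Submodule.span_le.2 ?_ h
    rintro _ ⟨_, ⟨p, rfl⟩, _, ⟨q, rfl⟩, rfl⟩
    exact Submodule.subset_span ⟨(⁅p.1, p.2⁆, ⁅q.1, q.2⁆), (lie_wedge_wedge ..).symm⟩
  have := lieSubalgebra_eq_top (K := { W with lie_mem' := fun ha hb => hW _ ha _ hb })
    fun x y => Submodule.subset_span ⟨(x, y), rfl⟩
  exact congrArg LieSubalgebra.toSubmodule this

lemma isLieAbelian (h : ∀ x y t : L, ⁅⁅x, y⁆, t⁆ = 0) : IsLieAbelian (ExteriorSquare k L) := by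
  have hgen : ∀ p q : L × L, ⁅wedge k p.1 p.2, wedge k q.1 q.2⁆ = 0 := by
    rintro ⟨x, y⟩ ⟨x', y'⟩
    have hc : ∀ t, ⁅t, ⁅x, y⁆⁆ = 0 := fun t => by rw [← lie_skew, h, neg_zero]
    have := wedge_lie_add_wedge_lie_add_wedge_lie (k := k) x' ⁅x, y⁆ y'
    rw [hc, h, wedge_zero_left, wedge_zero_left, zero_add, zero_add] at this
    rw [lie_wedge_wedge, wedge_swap ⁅x', y'⁆, ← wedge_neg_left, lie_skew, this]
  have hzero : (LieAlgebra.ad k (ExteriorSquare k L) :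
      ExteriorSquare k L →ₗ[k] Module.End k (ExteriorSquare k L)) = 0 :=
    LinearMap.ext_on_range (span_wedge_eq_top k L) fun p =>
      LinearMap.ext_on_range (span_wedge_eq_top k L) fun q => hgen p q
  exact ⟨fun a b => by simpa using LinearMap.congr_fun (LinearMap.congr_fun hzero a) b⟩

end ExteriorSquare

section Jacobiator

def AbelianLieOf.linearEquiv (k : Type) [Field k] (V : Type*) [AddCommGroup V] [Module k V] :
    AbelianLieOf V ≃ₗ[k] V :=
  LinearEquiv.refl k V

@[simp] lemma AbelianLieOf.lie_eq_zero {V : Type*} [AddCommGroup V] (a b : AbelianLieOf V) :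
    ⁅a, b⁆ = 0 := rfl

open exteriorPower

variable (k : Type) [Field k] (L : Type u) [LieRing L] [LieAlgebra k L]

noncomputable def jacobiator : L [⋀^Fin 3]→ₗ[k] ⋀[k]^2 L where
  toFun v := ιPair k L ⁅v 0, v 1⁆ (v 2) + ιPair k L ⁅v 1, v 2⁆ (v 0) + ιPair k L ⁅v 2, v 0⁆ (v 1)
  map_update_add' := by
    intro _ v i x y
    obtain rfl := Subsingleton.elim ‹DecidableEq (Fin 3)› (instDecidableEqFin 3)
    fin_cases i <;>
      simp only [Fin.zero_eta, Fin.mk_one, Fin.reduceFinMk, Fin.isValue, ne_eq, Fin.reduceEq,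
        zero_ne_one, one_ne_zero, not_false_eq_true, update_self, update_of_ne, add_lie, lie_add,
        map_add, LinearMap.add_apply] <;>
      abel
  map_update_smul' := by
    intro _ v i c x
    obtain rfl := Subsingleton.elim ‹DecidableEq (Fin 3)› (instDecidableEqFin 3)
    fin_cases i <;> simp [smul_lie, lie_smul]
  map_eq_zero_of_eq' v i j hv hij := by
    fin_cases i <;> fin_cases j <;>
      simp_all only [Fin.zero_eta, Fin.mk_one, Fin.reduceFinMk, Fin.isValue, ne_eq, Fin.reduceEq,
        zero_ne_one, one_ne_zero, not_true_eq_false, not_false_eq_true, lie_self, map_zero,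
        LinearMap.zero_apply, zero_add, add_zero] <;>
      rw [← lie_skew] <;>
      simp only [map_neg, LinearMap.neg_apply, neg_add_cancel]

noncomputable def jacobiatorSpan : Submodule k (⋀[k]^2 L) :=
  Submodule.span k (Set.range (jacobiator k L))

variable {k L}

lemma jacobiator_apply (v : Fin 3 → L) : jacobiator k L v =
    ιPair k L ⁅v 0, v 1⁆ (v 2) + ιPair k L ⁅v 1, v 2⁆ (v 0) + ιPair k L ⁅v 2, v 0⁆ (v 1) := rfl

lemma ιPair_lie_add_mem_jacobiatorSpan (x y w : L) :
    ιPair k L ⁅x, y⁆ w + ιPair k L ⁅y, w⁆ x + ιPair k L ⁅w, x⁆ y ∈ jacobiatorSpan k L :=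
  Submodule.subset_span ⟨![x, y, w], rfl⟩

-- The target is given the trivial bracket so that `L ∧ L`, a quotient of a free Lie algebra,
-- maps to it.
variable (k L) in
noncomputable def freeToJacobiatorQuotient :
    FreeLieAlgebra k (L × L) →ₗ⁅k⁆ AbelianLieOf (⋀[k]^2 L ⧸ jacobiatorSpan k L) :=
  FreeLieAlgebra.lift k fun p => (jacobiatorSpan k L).mkQ (ιPair k L p.1 p.2)

lemma freeToJacobiatorQuotient_of (x y : L) :
    AbelianLieOf.linearEquiv k _ (freeToJacobiatorQuotient k L (FreeLieAlgebra.of k (x, y))) =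
      (jacobiatorSpan k L).mkQ (ιPair k L x y) :=
  FreeLieAlgebra.lift_of_apply (L := AbelianLieOf _) _ _

lemma exteriorIdeal_le_ker_freeToJacobiatorQuotient (h : ∀ x y t : L, ⁅⁅x, y⁆, t⁆ = 0) :
    exteriorIdeal k L ≤ (freeToJacobiatorQuotient k L).ker := by
  rw [exteriorIdeal, LieSubmodule.lieSpan_le]
  intro a ha
  rw [SetLike.mem_coe, LieHom.mem_ker, ← (AbelianLieOf.linearEquiv k _).map_eq_zero_iff]
  rcases ha with ⟨x, x', y, rfl⟩ | ⟨x, y, y', rfl⟩ | ⟨c, x, y, rfl⟩ | ⟨c, x, y, rfl⟩ |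
    ⟨x, x', y, rfl⟩ | ⟨x, y, y', rfl⟩ | ⟨x, y, x', y', rfl⟩ | ⟨x, rfl⟩ <;>
    simp only [map_add, map_sub, map_smul, (freeToJacobiatorQuotient k L).map_lie,
      AbelianLieOf.lie_eq_zero, map_zero, freeToJacobiatorQuotient_of, LinearMap.add_apply,
      LinearMap.smul_apply, zero_add, sub_self, ιPair_self]
  · abel
  · abel
  · rw [← map_sub, ← map_add, ← LinearMap.mem_ker, Submodule.ker_mkQ]
    convert ιPair_lie_add_mem_jacobiatorSpan x x' y using 1
    rw [ιPair_swap ⁅x', y⁆ x, ιPair_swap ⁅x, y⁆ x', ← lie_skew y x, map_neg, LinearMap.neg_apply]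
    abel
  · rw [← map_sub, ← map_add, ← LinearMap.mem_ker, Submodule.ker_mkQ]
    convert (jacobiatorSpan k L).neg_mem (ιPair_lie_add_mem_jacobiatorSpan (k := k) y y' x)
      using 1
    rw [ιPair_swap ⁅y, y'⁆ x, ← lie_skew x y, map_neg, LinearMap.neg_apply]
    abel
  · rw [← LinearMap.mem_ker, Submodule.ker_mkQ]
    have hc : ∀ t, ⁅t, ⁅y, x⁆⁆ = 0 := fun t => by rw [← lie_skew, h, neg_zero]
    have := ιPair_lie_add_mem_jacobiatorSpan (k := k) x' ⁅y, x⁆ y'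
    rwa [hc, h, map_zero, LinearMap.zero_apply, LinearMap.zero_apply, zero_add, zero_add,
      ιPair_swap, ← map_neg, lie_skew] at this

end Jacobiator

section Equiv

open exteriorPower

variable (k : Type) [Field k] (L : Type u) [LieRing L] [LieAlgebra k L]

noncomputable def ofJacobiatorQuotient : ⋀[k]^2 L ⧸ jacobiatorSpan k L →ₗ[k] ExteriorSquare k L :=
  (jacobiatorSpan k L).liftQ (alternatingMapLinearEquiv (wedgeAlternatingMap k L)) <| by
    rw [jacobiatorSpan, Submodule.span_le]
    rintro _ ⟨v, rfl⟩
    simp [jacobiator_apply, ιPair_apply, alternatingMapLinearEquiv_apply_ιMulti,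
      wedgeAlternatingMap, wedge_lie_add_wedge_lie_add_wedge_lie]

variable {k L}

lemma ofJacobiatorQuotient_mk (x y : L) :
    ofJacobiatorQuotient k L (Submodule.Quotient.mk (ιPair k L x y)) = wedge k x y := by
  simp [ofJacobiatorQuotient, ιPair_apply, alternatingMapLinearEquiv_apply_ιMulti,
    wedgeAlternatingMap]

variable (k L) in
noncomputable def toJacobiatorQuotient (h : ∀ x y t : L, ⁅⁅x, y⁆, t⁆ = 0) :
    ExteriorSquare k L →ₗ[k] ⋀[k]^2 L ⧸ jacobiatorSpan k L :=
  (AbelianLieOf.linearEquiv k _).toLinearMap ∘ₗ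
    (lieQuotLift (exteriorIdeal k L) (freeToJacobiatorQuotient k L)
      (exteriorIdeal_le_ker_freeToJacobiatorQuotient h)).toLinearMap

lemma toJacobiatorQuotient_wedge (h : ∀ x y t : L, ⁅⁅x, y⁆, t⁆ = 0) (x y : L) :
    toJacobiatorQuotient k L h (wedge k x y) = Submodule.Quotient.mk (ιPair k L x y) :=
  freeToJacobiatorQuotient_of x y

variable (k L) in
noncomputable def exteriorSquareEquiv (h : ∀ x y t : L, ⁅⁅x, y⁆, t⁆ = 0) :
    ExteriorSquare k L ≃ₗ[k] ⋀[k]^2 L ⧸ jacobiatorSpan k L :=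
  LinearEquiv.ofLinearMap (toJacobiatorQuotient k L h) (ofJacobiatorQuotient k L)
    (Submodule.linearMap_qext _ <| linearMap_ext <| AlternatingMap.ext fun v => by
      simp [ιMulti_eq_ιPair, ofJacobiatorQuotient_mk, toJacobiatorQuotient_wedge])
    (LinearMap.ext_on_range (ExteriorSquare.span_wedge_eq_top k L) fun p => by
      simp [ofJacobiatorQuotient_mk, toJacobiatorQuotient_wedge])

lemma finrank_exteriorSquare_add_finrank_jacobiatorSpan [FiniteDimensional k L]
    (h : ∀ x y t : L, ⁅⁅x, y⁆, t⁆ = 0) :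
    finrank k (ExteriorSquare k L) + finrank k (jacobiatorSpan k L) = (finrank k L).choose 2 := by
  rw [(exteriorSquareEquiv k L h).finrank_eq, Submodule.finrank_quotient_add_finrank,
    exteriorPower.finrank_eq]

end Equiv

section OneDimensionalDerived

open exteriorPower

variable {k : Type} [Field k] {L : Type u} [LieRing L] [LieAlgebra k L]

lemma lie_lie_eq_zero_of_derived_le_center (h : derived k L ≤ LieAlgebra.center k L) (x y t : L) :
    ⁅⁅x, y⁆, t⁆ = 0 := by
  have hxy : ⁅x, y⁆ ∈ LieAlgebra.center k L :=
    h (LieSubmodule.lie_mem_lie (LieSubmodule.mem_top x) (LieSubmodule.mem_top y))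
  rw [← lie_skew, (LieModule.mem_maxTrivSubmodule k L L _).1 hxy t, neg_zero]

lemma jacobiatorSpan_le_range_ιPair {z : L} (hD : ∀ x y : L, ⁅x, y⁆ ∈ k ∙ z) :
    jacobiatorSpan k L ≤ LinearMap.range (ιPair k L z) := by
  have hmem : ∀ x y w : L, ιPair k L ⁅x, y⁆ w ∈ LinearMap.range (ιPair k L z) := by
    intro x y w
    obtain ⟨c, hc⟩ := Submodule.mem_span_singleton.1 (hD x y)
    exact ⟨c • w, by rw [← hc, map_smul, map_smul, LinearMap.smul_apply]⟩
  rw [jacobiatorSpan, Submodule.span_le]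
  rintro _ ⟨v, rfl⟩
  exact add_mem (add_mem (hmem ..) (hmem ..)) (hmem ..)

lemma jacobiator_eq_zero_of_apply_eq {z : L} (hD : ∀ x y : L, ⁅x, y⁆ ∈ k ∙ z)
    (hz : z ∈ LieAlgebra.center k L) {v : Fin 3 → L} {i : Fin 3} (hi : v i = z) :
    jacobiator k L v = 0 := by
  have hzl : ∀ x, ⁅x, z⁆ = 0 := (LieModule.mem_maxTrivSubmodule k L L z).1 hz
  have hzr : ∀ x : L, ⁅z, x⁆ = 0 := fun x => by rw [← lie_skew, hzl, neg_zero]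
  have hlie : ∀ x y, ιPair k L ⁅x, y⁆ z = 0 := fun x y => by
    obtain ⟨c, hc⟩ := Submodule.mem_span_singleton.1 (hD x y)
    rw [← hc, map_smul, LinearMap.smul_apply, ιPair_self, smul_zero]
  fin_cases i <;>
    simp only [Fin.zero_eta, Fin.mk_one, Fin.reduceFinMk, Fin.isValue] at hi <;>
    simp [jacobiator_apply, hi, hzl, hzr, hlie]

lemma jacobiatorSpan_eq_bot_of_finrank_eq_three [FiniteDimensional k L] (hL : finrank k L = 3)
    {z : L} (hz0 : z ≠ 0) (hD : ∀ x y : L, ⁅x, y⁆ ∈ k ∙ z) (hz : z ∈ LieAlgebra.center k L) :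
    jacobiatorSpan k L = ⊥ := by
  have hli : LinearIndepOn k id {z} := LinearIndepOn.singleton hz0
  let b := Basis.extend hli
  have hzb : z ∈ hli.extend (Set.subset_univ _) := hli.subset_extend _ rfl
  have : Finite (hli.extend (Set.subset_univ _)) := Module.Finite.finite_basis b
  have hjac : jacobiator k L = 0 := b.ext_alternating fun v hv => by
    have hcard : Nat.card (hli.extend (Set.subset_univ _)) ≤ Nat.card (Fin 3) := by
      rw [Nat.card_fin, ← Module.finrank_eq_nat_card_basis b, hL]
    obtain ⟨i, hi⟩ := (hv.bijective_of_nat_card_le hcard).2 ⟨z, hzb⟩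
    rw [AlternatingMap.zero_apply]
    exact jacobiator_eq_zero_of_apply_eq hD hz (i := i) (by simp [b, hi])
  simp [jacobiatorSpan, hjac]

lemma range_ιPair_le_jacobiatorSpan {z : L} (hD : ∀ x y : L, ⁅x, y⁆ ∈ k ∙ z)
    (hcomm : ∀ w : L, ∃ u v : L, ⁅w, u⁆ = 0 ∧ ⁅w, v⁆ = 0 ∧ ⁅u, v⁆ ≠ 0) :
    LinearMap.range (ιPair k L z) ≤ jacobiatorSpan k L := by
  rintro _ ⟨w, rfl⟩
  obtain ⟨u, v, hu, hv, huv⟩ := hcomm w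
  obtain ⟨c, hc⟩ := Submodule.mem_span_singleton.1 (hD u v)
  have hc0 : c ≠ 0 := by
    rintro rfl
    exact huv (by rw [← hc, zero_smul])
  have := ιPair_lie_add_mem_jacobiatorSpan (k := k) u v w
  rwa [← lie_skew v w, hv, hu, neg_zero, map_zero, LinearMap.zero_apply, LinearMap.zero_apply,
    add_zero, add_zero, ← hc, map_smul, LinearMap.smul_apply,
    Submodule.smul_mem_iff _ hc0] at this

lemma finrank_le_finrank_ker_ad_add [FiniteDimensional k L] (w : L) :
    finrank k L ≤ finrank k (LinearMap.ker (LieAlgebra.ad k L w)) + finrank k (derived k L) := by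
  have hrange : LinearMap.range (LieAlgebra.ad k L w) ≤ (derived k L).toSubmodule := by
    rintro _ ⟨u, rfl⟩
    exact LieSubmodule.lie_mem_lie (LieSubmodule.mem_top w) (LieSubmodule.mem_top u)
  have := Submodule.finrank_mono hrange
  have := LinearMap.finrank_range_add_finrank_ker (LieAlgebra.ad k L w)
  change _ ≤ _ + finrank k (derived k L).toSubmodule
  omega

lemma exists_lie_eq_zero_lie_ne_zero [FiniteDimensional k L] (hD : finrank k (derived k L) = 1)
    (hZ : finrank k (LieAlgebra.center k L) ≤ 1) (hL : 3 < finrank k L) (w : L) :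
    ∃ u v : L, ⁅w, u⁆ = 0 ∧ ⁅w, v⁆ = 0 ∧ ⁅u, v⁆ ≠ 0 := by
  -- If the centralizer `C` of `w` were abelian, then for `y ∉ C` the intersection of `C` with
  -- the centralizer of `y` would be central, yet it has dimension at least `finrank L - 2`.
  by_contra! hC
  set C := LinearMap.ker (LieAlgebra.ad k L w)
  obtain ⟨y, hy⟩ : ∃ y, y ∉ C := by
    by_contra! hall
    have : (derived k L).toSubmodule = ⊥ := by
      rw [LieSubmodule.toSubmodule_eq_bot, derived, LieSubmodule.lie_eq_bot_iff]
      exact fun u _ v _ => hC u v (hall u) (hall v)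
    have hD' : finrank k (derived k L).toSubmodule = 1 := hD
    rw [this, finrank_bot] at hD'
    exact zero_ne_one hD'
  set C' := LinearMap.ker (LieAlgebra.ad k L y)
  have hCw : finrank k L ≤ finrank k C + 1 := hD ▸ finrank_le_finrank_ker_ad_add w
  have hCy : finrank k L ≤ finrank k C' + 1 := hD ▸ finrank_le_finrank_ker_ad_add y
  have hsup : C ⊔ k ∙ y = ⊤ := by
    have hlt : C < C ⊔ k ∙ y := lt_of_le_of_ne le_sup_left fun h =>
      hy (h ▸ Submodule.mem_sup_right (Submodule.mem_span_singleton_self y))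
    have := Submodule.finrank_lt_finrank_of_lt hlt
    have := Submodule.finrank_le (C ⊔ k ∙ y)
    exact Submodule.eq_top_of_finrank_eq (by omega)
  have hinf : C ⊓ C' ≤ (LieAlgebra.center k L).toSubmodule := by
    rintro x ⟨hxC, hxy⟩
    rw [LieSubmodule.mem_toSubmodule, LieModule.mem_maxTrivSubmodule]
    intro t
    obtain ⟨c, hc, d, hd, rfl⟩ := Submodule.mem_sup.1 (hsup ▸ Submodule.mem_top : t ∈ C ⊔ k ∙ y)
    obtain ⟨a, rfl⟩ := Submodule.mem_span_singleton.1 hd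
    rw [add_lie, smul_lie, hC c x hc hxC, show ⁅y, x⁆ = 0 from hxy, smul_zero, add_zero]
  have := Submodule.finrank_sup_add_finrank_inf_eq C C'
  have := Submodule.finrank_le (C ⊔ C')
  have : finrank k ↥(C ⊓ C') ≤ finrank k (LieAlgebra.center k L) := Submodule.finrank_mono hinf
  omega

end OneDimensionalDerived

open exteriorPower in
theorem exterior_square_heisenberg_general (k : Type) [Field k] (L : Type u) [LieRing L]
    [LieAlgebra k L] [Module.Finite k L] (m : ℕ) (hL : IsHeisenberg k L m) :
    IsLieAbelian (ExteriorSquare k L) ∧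
    (m = 1 → Module.finrank k (ExteriorSquare k L) = 3) ∧
    (2 ≤ m → Module.finrank k (ExteriorSquare k L) = 2 * m ^ 2 - m) := by
  obtain ⟨hDZ, hdim, hD1⟩ := hL
  have hclass := lie_lie_eq_zero_of_derived_le_center hDZ.le
  obtain ⟨z, hz0, hDz⟩ := Submodule.exists_eq_span_singleton_of_finrank_eq_one hD1
  have hD : ∀ x y : L, ⁅x, y⁆ ∈ k ∙ z := fun x y =>
    hDz ▸ LieSubmodule.lie_mem_lie (LieSubmodule.mem_top x) (LieSubmodule.mem_top y)
  have hzc : z ∈ LieAlgebra.center k L :=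
    hDZ ▸ (hDz ▸ Submodule.mem_span_singleton_self z : z ∈ (derived k L).toSubmodule)
  have hfin := finrank_exteriorSquare_add_finrank_jacobiatorSpan (k := k) hclass
  refine ⟨ExteriorSquare.isLieAbelian hclass, fun hm1 => ?_, fun hm2 => ?_⟩
  · subst hm1
    rw [jacobiatorSpan_eq_bot_of_finrank_eq_three hdim hz0 hD hzc, finrank_bot, hdim] at hfin
    simpa using hfin
  · have hR : jacobiatorSpan k L = LinearMap.range (ιPair k L z) :=
      le_antisymm (jacobiatorSpan_le_range_ιPair hD) (range_ιPair_le_jacobiatorSpan hD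
        (exists_lie_eq_zero_lie_ne_zero hD1 (hDZ ▸ hD1.le) (by omega)))
    have hrange := finrank_range_ιPair (K := k) hz0
    rw [hR, hdim, Nat.choose_two_right] at hfin
    have : (2 * m + 1) * (2 * m + 1 - 1) / 2 = 2 * m ^ 2 + m := by
      rw [Nat.add_sub_cancel, Nat.div_eq_of_eq_mul_left two_pos]; ring
    omega

/-- `H(1) ∧ H(1) ≅ A(3)` and `H(m) ∧ H(m) ≅ A(2m² - m)` for `m ≥ 2`:
the exterior square of a Heisenberg algebra is abelian, of dimension `3` when `m = 1` and
`2m² - m` when `m ≥ 2`. -/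
theorem exterior_square_heisenberg (k : Type) [Field k] (L : Type u) [LieRing L]
    [LieAlgebra k L] [Module.Finite k L] (m : ℕ) (hm : 1 ≤ m) (hL : IsHeisenberg k L m) :
    IsLieAbelian (ExteriorSquare k L) ∧
    (m = 1 → Module.finrank k (ExteriorSquare k L) = 3) ∧
    (2 ≤ m → Module.finrank k (ExteriorSquare k L) = 2 * m ^ 2 - m) :=
  exterior_square_heisenberg_general k L m hL
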